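/- arXiv:math/0309097 — 2 statements merged into one kernel-verified Lean document; each statement's English description precedes it below -/
import Mathlib

section
/- Let ψ₁, ψ₂ be smooth complex-valued functions on a domain in ℂ satisfying the generalised Weierstrass system ∂ψ₁ = p ψ₂, ∂̄ψ₂ = −p ψ₁, where p = |ψ₁|² + |ψ₂|². Then the function J = ψ̄₁ ∂ψ₂ − ψ₂ ∂ψ̄₁ is holomorphic: ∂̄J = 0. -/
open Complex ComplexConjugate

/-- The Wirtinger derivative `∂ = ∂/∂z`. -/
noncomputable def wdz (f : ℂ → ℂ) (z : ℂ) : ℂ :=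
  (1 / 2 : ℂ) * (fderiv ℝ f z 1 - I * fderiv ℝ f z I)

/-- The Wirtinger derivative `∂̄ = ∂/∂z̄`. -/
noncomputable def wdzbar (f : ℂ → ℂ) (z : ℂ) : ℂ :=
  (1 / 2 : ℂ) * (fderiv ℝ f z 1 + I * fderiv ℝ f z I)

lemma wdz_congr {f g : ℂ → ℂ} {z : ℂ} (h : f =ᶠ[nhds z] g) : wdz f z = wdz g z := by
  simp [wdz, h.fderiv_eq]

lemma wdz_mul {f g : ℂ → ℂ} {z : ℂ} (hf : DifferentiableAt ℝ f z)
    (hg : DifferentiableAt ℝ g z) :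
    wdz (fun t => f t * g t) z = wdz f z * g z + f z * wdz g z := by
  simp only [wdz, fderiv_fun_mul hf hg, ContinuousLinearMap.add_apply,
    ContinuousLinearMap.smul_apply, ContinuousLinearMap.smulRight_apply, smul_eq_mul]
  ring

lemma wdz_add {f g : ℂ → ℂ} {z : ℂ} (hf : DifferentiableAt ℝ f z)
    (hg : DifferentiableAt ℝ g z) :
    wdz (fun t => f t + g t) z = wdz f z + wdz g z := by
  simp only [wdz, fderiv_fun_add hf hg, ContinuousLinearMap.add_apply]
  ring

lemma wdzbar_mul {f g : ℂ → ℂ} {z : ℂ} (hf : DifferentiableAt ℝ f z)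
    (hg : DifferentiableAt ℝ g z) :
    wdzbar (fun t => f t * g t) z = wdzbar f z * g z + f z * wdzbar g z := by
  simp only [wdzbar, fderiv_fun_mul hf hg, ContinuousLinearMap.add_apply,
    ContinuousLinearMap.smul_apply, ContinuousLinearMap.smulRight_apply, smul_eq_mul]
  ring

lemma wdzbar_sub {f g : ℂ → ℂ} {z : ℂ} (hf : DifferentiableAt ℝ f z)
    (hg : DifferentiableAt ℝ g z) :
    wdzbar (fun t => f t - g t) z = wdzbar f z - wdzbar g z := by
  simp only [wdzbar, fderiv_fun_sub hf hg, ContinuousLinearMap.sub_apply]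
  ring

lemma wdz_neg {f : ℂ → ℂ} {z : ℂ} :
    wdz (fun t => -f t) z = -wdz f z := by
  simp only [wdz, fderiv_fun_neg, ContinuousLinearMap.neg_apply]
  ring

lemma wdzbar_conj (f : ℂ → ℂ) (z : ℂ) :
    wdzbar (fun t => conj (f t)) z = conj (wdz f z) := by
  simp only [wdzbar, wdz, ← starRingEnd_apply]
  have : fderiv ℝ (fun t => conj (f t)) z
      = ((starL' ℝ : ℂ ≃L[ℝ] ℂ) : ℂ →L[ℝ] ℂ).comp (fderiv ℝ f z) := fderiv_star
  rw [this]
  have hap : ∀ v : ℂ, (((starL' ℝ : ℂ ≃L[ℝ] ℂ) : ℂ →L[ℝ] ℂ).comp (fderiv ℝ f z)) v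
      = conj (fderiv ℝ f z v) := fun v => by rw [ContinuousLinearMap.comp_apply]; rfl
  rw [hap, hap]
  simp only [map_mul, map_sub, map_add, map_one, map_ofNat, map_div₀, Complex.conj_I]
  ring

lemma wdz_conj (f : ℂ → ℂ) (z : ℂ) :
    wdz (fun t => conj (f t)) z = conj (wdzbar f z) := by
  simp only [wdzbar, wdz, ← starRingEnd_apply]
  have : fderiv ℝ (fun t => conj (f t)) z
      = ((starL' ℝ : ℂ ≃L[ℝ] ℂ) : ℂ →L[ℝ] ℂ).comp (fderiv ℝ f z) := fderiv_star
  rw [this]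
  have hap : ∀ v : ℂ, (((starL' ℝ : ℂ ≃L[ℝ] ℂ) : ℂ →L[ℝ] ℂ).comp (fderiv ℝ f z)) v
      = conj (fderiv ℝ f z v) := fun v => by rw [ContinuousLinearMap.comp_apply]; rfl
  rw [hap, hap]
  simp only [map_mul, map_sub, map_add, map_one, map_ofNat, map_div₀, Complex.conj_I]
  ring

lemma hasFDerivAt_ev {f : ℂ → ℂ} {z : ℂ} (hF : DifferentiableAt ℝ (fderiv ℝ f) z) (v : ℂ) :
    HasFDerivAt (fun t => fderiv ℝ f t v) ((fderiv ℝ (fderiv ℝ f) z).flip v) z := by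
  have h := (hF.clm_apply (differentiableAt_const v)).hasFDerivAt
  rwa [fderiv_clm_apply hF (differentiableAt_const v), fderiv_const_apply,
    ContinuousLinearMap.comp_zero, zero_add] at h

lemma hasFDerivAt_wdz {f : ℂ → ℂ} {z : ℂ} (hF : DifferentiableAt ℝ (fderiv ℝ f) z) :
    HasFDerivAt (wdz f)
      ((1/2 : ℂ) • (((fderiv ℝ (fderiv ℝ f) z).flip 1)
        - I • ((fderiv ℝ (fderiv ℝ f) z).flip I))) z := by
  have h1 := hasFDerivAt_ev hF 1
  have hI := hasFDerivAt_ev hF I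
  exact ((h1.sub (hI.const_mul I)).const_mul (1/2 : ℂ))

lemma hasFDerivAt_wdzbar {f : ℂ → ℂ} {z : ℂ} (hF : DifferentiableAt ℝ (fderiv ℝ f) z) :
    HasFDerivAt (wdzbar f)
      ((1/2 : ℂ) • (((fderiv ℝ (fderiv ℝ f) z).flip 1)
        + I • ((fderiv ℝ (fderiv ℝ f) z).flip I))) z := by
  have h1 := hasFDerivAt_ev hF 1
  have hI := hasFDerivAt_ev hF I
  exact ((h1.add (hI.const_mul I)).const_mul (1/2 : ℂ))

lemma differentiableAt_wdz {f : ℂ → ℂ} {z : ℂ} (hf : ContDiffAt ℝ 2 f z) :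
    DifferentiableAt ℝ (wdz f) z :=
  (hasFDerivAt_wdz ((hf.fderiv_right (le_refl 2)).differentiableAt one_ne_zero)).differentiableAt

lemma wdzbar_wdz_comm {f : ℂ → ℂ} {z : ℂ} (hf : ContDiffAt ℝ 2 f z) :
    wdzbar (wdz f) z = wdz (wdzbar f) z := by
  have hF : DifferentiableAt ℝ (fderiv ℝ f) z :=
    (hf.fderiv_right (le_refl 2)).differentiableAt one_ne_zero
  have hsym : IsSymmSndFDerivAt ℝ f z := hf.isSymmSndFDerivAt (by simp)
  set A := fderiv ℝ (fderiv ℝ f) z with hA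
  have e1 := (hasFDerivAt_wdz hF).fderiv
  have e2 := (hasFDerivAt_wdzbar hF).fderiv
  simp only [wdz, wdzbar, e1, e2, ContinuousLinearMap.smul_apply, ContinuousLinearMap.sub_apply,
    ContinuousLinearMap.add_apply, ContinuousLinearMap.flip_apply, smul_eq_mul]
  have h := hsym 1 I
  rw [← hA] at h
  rw [h]
  ring

/-- For solutions of the generalised Weierstrass system `∂ψ₁ = pψ₂`, `∂̄ψ₂ = -pψ₁`
with `p = |ψ₁|² + |ψ₂|²`, the function `J = ψ̄₁∂ψ₂ - ψ₂∂ψ̄₁` is holomorphic. -/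
theorem gw_J_holomorphic (s : Set ℂ) (hs : IsOpen s) (ψ₁ ψ₂ : ℂ → ℂ)
    (hψ₁ : ContDiffOn ℝ (⊤ : ℕ∞) ψ₁ s) (hψ₂ : ContDiffOn ℝ (⊤ : ℕ∞) ψ₂ s)
    (h1 : ∀ z ∈ s, wdz ψ₁ z = ((normSq (ψ₁ z) + normSq (ψ₂ z) : ℝ) : ℂ) * ψ₂ z)
    (h2 : ∀ z ∈ s, wdzbar ψ₂ z = -((normSq (ψ₁ z) + normSq (ψ₂ z) : ℝ) : ℂ) * ψ₁ z) :
    ∀ z ∈ s,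
      wdzbar (fun t => conj (ψ₁ t) * wdz ψ₂ t - ψ₂ t * wdz (fun u => conj (ψ₁ u)) t) z
        = 0 := by
  intro z hz
  have hmem : s ∈ nhds z := hs.mem_nhds hz
  set P : ℂ → ℂ := fun t => ((normSq (ψ₁ t) + normSq (ψ₂ t) : ℝ) : ℂ) with hP
  have hPeq : ∀ t, P t = ψ₁ t * conj (ψ₁ t) + ψ₂ t * conj (ψ₂ t) := by
    intro t
    simp only [hP, Complex.ofReal_add, Complex.mul_conj]
  have hψ₁2 : ContDiffAt ℝ 2 ψ₁ z := (hψ₁.contDiffAt hmem).of_le (WithTop.coe_le_coe.mpr le_top)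
  have hψ₂2 : ContDiffAt ℝ 2 ψ₂ z := (hψ₂.contDiffAt hmem).of_le (WithTop.coe_le_coe.mpr le_top)
  have hC₁2 : ContDiffAt ℝ 2 (fun t => conj (ψ₁ t)) z := by
    exact ((starL' ℝ : ℂ ≃L[ℝ] ℂ).toContinuousLinearMap.contDiff.comp_contDiffAt z hψ₁2 :)
  have hψ₁d : DifferentiableAt ℝ ψ₁ z := hψ₁2.differentiableAt two_ne_zero
  have hψ₂d : DifferentiableAt ℝ ψ₂ z := hψ₂2.differentiableAt two_ne_zero
  have hC₁d : DifferentiableAt ℝ (fun t => conj (ψ₁ t)) z := hC₁2.differentiableAt two_ne_zero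
  have hC₂d : DifferentiableAt ℝ (fun t => conj (ψ₂ t)) z := by
    exact (((starL' ℝ : ℂ ≃L[ℝ] ℂ).toContinuousLinearMap.differentiable.differentiableAt).comp z
      hψ₂d :)
  have hPd : DifferentiableAt ℝ P z := by
    have : P = fun t => ψ₁ t * conj (ψ₁ t) + ψ₂ t * conj (ψ₂ t) := funext hPeq
    rw [this]
    exact (hψ₁d.mul hC₁d).add (hψ₂d.mul hC₂d)
  have hev1 : wdz ψ₁ =ᶠ[nhds z] fun t => P t * ψ₂ t :=
    Filter.eventually_of_mem hmem fun t ht => h1 t ht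
  have hev2 : wdzbar ψ₂ =ᶠ[nhds z] fun t => -(P t * ψ₁ t) :=
    Filter.eventually_of_mem hmem fun t ht => by rw [h2 t ht]; ring
  have hz1 : wdz ψ₁ z = P z * ψ₂ z := h1 z hz
  have hz2 : wdzbar ψ₂ z = -(P z * ψ₁ z) := by rw [h2 z hz]; ring
  have hPconj : ∀ t, conj (P t) = P t := fun t => Complex.conj_ofReal _
  -- the unknown quantity ∂(conj ψ₁)
  set q : ℂ := wdz (fun u => conj (ψ₁ u)) z with hq
  -- value of ∂(conj ψ₂)
  have hC₂z : wdz (fun t => conj (ψ₂ t)) z = -(P z * conj (ψ₁ z)) := by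
    rw [wdz_conj, hz2]
    simp only [map_neg, map_mul, hPconj]
  -- value of ∂P
  have hwP : wdz P z = ψ₁ z * q + conj (ψ₂ z) * wdz ψ₂ z := by
    have : P = fun t => ψ₁ t * conj (ψ₁ t) + ψ₂ t * conj (ψ₂ t) := funext hPeq
    rw [this, wdz_add (hψ₁d.fun_mul hC₁d) (hψ₂d.fun_mul hC₂d), wdz_mul hψ₁d hC₁d,
      wdz_mul hψ₂d hC₂d, hz1, hC₂z]
    ring
  -- term 1 : ∂̄(conj ψ₁)
  have T1 : wdzbar (fun t => conj (ψ₁ t)) z = P z * conj (ψ₂ z) := by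
    rw [wdzbar_conj, hz1, map_mul, hPconj]
  -- term 2 : ∂̄∂ψ₂
  have T2 : wdzbar (wdz ψ₂) z = -(wdz P z * ψ₁ z + P z * (P z * ψ₂ z)) := by
    rw [wdzbar_wdz_comm hψ₂2, wdz_congr hev2, wdz_neg, wdz_mul hPd hψ₁d, hz1]
  -- term 5 : ∂̄∂(conj ψ₁)
  have T5 : wdzbar (wdz fun u => conj (ψ₁ u)) z
      = wdz P z * conj (ψ₂ z) + P z * -(P z * conj (ψ₁ z)) := by
    rw [wdzbar_wdz_comm hC₁2]
    have heq : (wdzbar fun u => conj (ψ₁ u)) =ᶠ[nhds z] fun t => P t * conj (ψ₂ t) := by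
      have hfe : (wdzbar fun u => conj (ψ₁ u)) = fun t => conj (wdz ψ₁ t) :=
        funext fun t => wdzbar_conj ψ₁ t
      rw [hfe]
      filter_upwards [hev1] with t ht
      rw [ht, map_mul, hPconj]
    rw [wdz_congr heq, wdz_mul hPd hC₂d, hC₂z]
  -- expand the ∂̄ of the product
  have dwψ₂ : DifferentiableAt ℝ (wdz ψ₂) z := differentiableAt_wdz hψ₂2
  have dwC₁ : DifferentiableAt ℝ (wdz fun u => conj (ψ₁ u)) z := differentiableAt_wdz hC₁2
  rw [wdzbar_sub (hC₁d.fun_mul dwψ₂) (hψ₂d.fun_mul dwC₁), wdzbar_mul hC₁d dwψ₂,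
    wdzbar_mul hψ₂d dwC₁, T1, T2, T5, ← hq, hz2, hwP, hPeq z]
  ring
end

section
/- Let w₁, w₂ be smooth complex functions on a domain in ℂ solving the CP² sigma model equations: ∂∂̄w₁ − (2w̄₁/A)∂w₁∂̄w₁ − (w̄₂/A)(∂w₁∂̄w₂ + ∂̄w₁∂w₂) = 0 and ∂∂̄w₂ − (2w̄₂/A)∂w₂∂̄w₂ − (w̄₁/A)(∂w₁∂̄w₂ + ∂̄w₁∂w₂) = 0, where A = 1 + |w₁|² + |w₂|². Then J = A^{−2}[ ∂w₁∂w̄₁ + ∂w₂∂w̄₂ + (w̄₁∂w̄₂ − w̄₂∂w̄₁)(w₁∂w₂ − w₂∂w₁) ] is holomorphic: ∂̄J = 0. -/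
open Complex ComplexConjugate

namespace CP2aux

variable {f g : ℂ → ℂ} {z : ℂ}

theorem wdzbar_congr (h : f =ᶠ[nhds z] g) : wdzbar f z = wdzbar g z := by
  unfold wdzbar; rw [h.fderiv_eq]

theorem diff_conj (hf : DifferentiableAt ℝ f z) :
    DifferentiableAt ℝ (fun t => conj (f t)) z :=
  (Complex.conjCLE.toContinuousLinearMap.differentiableAt).comp z hf

theorem fderiv_conj_apply (hf : DifferentiableAt ℝ f z) (v : ℂ) :
    fderiv ℝ (fun t => conj (f t)) z v = conj (fderiv ℝ f z v) := by
  have h : HasFDerivAt (fun t => conj (f t))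
      ((Complex.conjCLE.toContinuousLinearMap).comp (fderiv ℝ f z)) z :=
    (Complex.conjCLE.toContinuousLinearMap.hasFDerivAt
      (x := f z)).comp z hf.hasFDerivAt
  rw [h.fderiv]
  rfl

theorem wdz_conj (hf : DifferentiableAt ℝ f z) :
    wdz (fun t => conj (f t)) z = conj (wdzbar f z) := by
  unfold wdz wdzbar
  rw [fderiv_conj_apply hf, fderiv_conj_apply hf]
  simp only [map_mul, map_add, map_sub, map_one, map_ofNat, Complex.conj_I, map_div₀]
  ring

theorem wdzbar_conj (hf : DifferentiableAt ℝ f z) :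
    wdzbar (fun t => conj (f t)) z = conj (wdz f z) := by
  unfold wdz wdzbar
  rw [fderiv_conj_apply hf, fderiv_conj_apply hf]
  simp only [map_mul, map_add, map_sub, map_one, map_ofNat, Complex.conj_I, map_div₀]
  ring

theorem wdzbar_mul (hf : DifferentiableAt ℝ f z) (hg : DifferentiableAt ℝ g z) :
    wdzbar (fun t => f t * g t) z = wdzbar f z * g z + f z * wdzbar g z := by
  unfold wdzbar
  rw [fderiv_fun_mul hf hg]
  simp only [ContinuousLinearMap.add_apply, ContinuousLinearMap.smul_apply, smul_eq_mul]
  ring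

theorem wdzbar_add (hf : DifferentiableAt ℝ f z) (hg : DifferentiableAt ℝ g z) :
    wdzbar (fun t => f t + g t) z = wdzbar f z + wdzbar g z := by
  unfold wdzbar
  rw [fderiv_fun_add hf hg]
  simp only [ContinuousLinearMap.add_apply]
  ring

theorem wdzbar_sub (hf : DifferentiableAt ℝ f z) (hg : DifferentiableAt ℝ g z) :
    wdzbar (fun t => f t - g t) z = wdzbar f z - wdzbar g z := by
  unfold wdzbar
  rw [fderiv_fun_sub hf hg]
  simp only [ContinuousLinearMap.sub_apply]
  ring

theorem wdzbar_const (c : ℂ) : wdzbar (fun _ => c) z = 0 := by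
  unfold wdzbar
  rw [fderiv_fun_const]
  simp

theorem wdzbar_inv (hf : DifferentiableAt ℝ f z) (h0 : f z ≠ 0) :
    wdzbar (fun t => (f t)⁻¹) z = -wdzbar f z / (f z) ^ 2 := by
  have hinv : HasFDerivAt (fun t : ℂ => t⁻¹)
      (((ContinuousLinearMap.smulRight (1 : ℂ →L[ℂ] ℂ)
        (-((f z) ^ 2)⁻¹)).restrictScalars ℝ)) (f z) :=
    ((hasDerivAt_inv h0).hasFDerivAt).restrictScalars ℝ
  have h : HasFDerivAt (fun t => (f t)⁻¹)
      (((ContinuousLinearMap.smulRight (1 : ℂ →L[ℂ] ℂ)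
        (-((f z) ^ 2)⁻¹)).restrictScalars ℝ).comp (fderiv ℝ f z)) z :=
    hinv.comp z hf.hasFDerivAt
  unfold wdzbar
  rw [h.fderiv]
  simp only [ContinuousLinearMap.coe_comp', Function.comp_apply,
    ContinuousLinearMap.coe_restrictScalars', ContinuousLinearMap.smulRight_apply,
    ContinuousLinearMap.one_apply, smul_eq_mul]
  field_simp
  ring

end CP2aux

namespace CP2aux
variable {f g : ℂ → ℂ} {z : ℂ}

theorem diff_wdz (hf : DifferentiableAt ℝ (fderiv ℝ f) z) :
    DifferentiableAt ℝ (fun t => wdz f t) z := by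
  unfold wdz
  exact ((hf.clm_apply (differentiableAt_const _)).sub
    ((hf.clm_apply (differentiableAt_const _)).const_mul I)).const_mul _

theorem diff_wdzbar (hf : DifferentiableAt ℝ (fderiv ℝ f) z) :
    DifferentiableAt ℝ (fun t => wdzbar f t) z := by
  unfold wdzbar
  exact ((hf.clm_apply (differentiableAt_const _)).add
    ((hf.clm_apply (differentiableAt_const _)).const_mul I)).const_mul _

theorem fderiv_fderiv_apply (hf : DifferentiableAt ℝ (fderiv ℝ f) z) (v w : ℂ) :
    fderiv ℝ (fun t => fderiv ℝ f t v) z w = fderiv ℝ (fderiv ℝ f) z w v := by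
  have h : HasFDerivAt (fun t => fderiv ℝ f t v)
      ((ContinuousLinearMap.apply ℝ ℂ v).comp (fderiv ℝ (fderiv ℝ f) z)) z :=
    ((ContinuousLinearMap.apply ℝ ℂ v).hasFDerivAt).comp z hf.hasFDerivAt
  rw [h.fderiv]; rfl

theorem wdz_wdzbar_comm (hf : ContDiffAt ℝ 2 f z) :
    wdz (fun t => wdzbar f t) z = wdzbar (fun t => wdz f t) z := by
  have hD : DifferentiableAt ℝ (fderiv ℝ f) z :=
    (hf.fderiv_right (m := 1) (le_refl _)).differentiableAt one_ne_zero
  have hsymm := (hf.isSymmSndFDerivAt (by simp)) 1 I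
  have h1 : DifferentiableAt ℝ (fun t => fderiv ℝ f t 1) z :=
    hD.clm_apply (differentiableAt_const _)
  have hI : DifferentiableAt ℝ (fun t => fderiv ℝ f t I) z :=
    hD.clm_apply (differentiableAt_const _)
  conv_lhs => rw [show (fun t => wdzbar f t) =
    (fun t => (1/2 : ℂ) * (fderiv ℝ f t 1 + I * fderiv ℝ f t I)) from rfl]
  conv_rhs => rw [show (fun t => wdz f t) =
    (fun t => (1/2 : ℂ) * (fderiv ℝ f t 1 - I * fderiv ℝ f t I)) from rfl]
  unfold wdz wdzbar
  rw [fderiv_const_mul (by exact h1.add (hI.const_mul I)) ((1:ℂ)/2),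
      fderiv_const_mul (by exact h1.sub (hI.const_mul I)) ((1:ℂ)/2),
      fderiv_fun_add h1 (hI.const_mul I), fderiv_fun_sub h1 (hI.const_mul I),
      fderiv_const_mul hI I]
  simp only [ContinuousLinearMap.smul_apply, ContinuousLinearMap.add_apply,
    ContinuousLinearMap.sub_apply, smul_eq_mul,
    fderiv_fderiv_apply hD]
  rw [show fderiv ℝ (fderiv ℝ f) z 1 I = fderiv ℝ (fderiv ℝ f) z I 1 from hsymm]
  ring

end CP2aux
/-- For solutions `(w₁, w₂)` of the `CP²` sigma model equations, the quantity
`J = A⁻²[∂w₁∂w̄₁ + ∂w₂∂w̄₂ + (w̄₁∂w̄₂ - w̄₂∂w̄₁)(w₁∂w₂ - w₂∂w₁)]`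
is holomorphic: `∂̄J = 0`. -/
theorem cp2_J_holomorphic (s : Set ℂ) (hs : IsOpen s) (w₁ w₂ : ℂ → ℂ)
    (hw₁ : ContDiffOn ℝ (⊤ : ℕ∞) w₁ s) (hw₂ : ContDiffOn ℝ (⊤ : ℕ∞) w₂ s)
    (A : ℂ → ℂ)
    (hA : ∀ z, A z = 1 + ((normSq (w₁ z) : ℝ) : ℂ) + ((normSq (w₂ z) : ℝ) : ℂ))
    (heq1 : ∀ z ∈ s,
      wdz (fun t => wdzbar w₁ t) z - 2 * conj (w₁ z) / A z * wdz w₁ z * wdzbar w₁ z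
        - conj (w₂ z) / A z * (wdz w₁ z * wdzbar w₂ z + wdzbar w₁ z * wdz w₂ z) = 0)
    (heq2 : ∀ z ∈ s,
      wdz (fun t => wdzbar w₂ t) z - 2 * conj (w₂ z) / A z * wdz w₂ z * wdzbar w₂ z
        - conj (w₁ z) / A z * (wdz w₁ z * wdzbar w₂ z + wdzbar w₁ z * wdz w₂ z) = 0) :
    ∀ z ∈ s,
      wdzbar (fun t =>
        (wdz w₁ t * wdz (fun u => conj (w₁ u)) t
          + wdz w₂ t * wdz (fun u => conj (w₂ u)) t
          + (conj (w₁ t) * wdz (fun u => conj (w₂ u)) t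
              - conj (w₂ t) * wdz (fun u => conj (w₁ u)) t)
            * (w₁ t * wdz w₂ t - w₂ t * wdz w₁ t)) / (A t) ^ 2) z = 0 := by
  intro z hz
  have hc₁ : ∀ t ∈ s, ContDiffAt ℝ 2 w₁ t :=
    fun t ht => (hw₁.contDiffAt (hs.mem_nhds ht)).of_le (WithTop.coe_le_coe.mpr le_top)
  have hc₂ : ∀ t ∈ s, ContDiffAt ℝ 2 w₂ t :=
    fun t ht => (hw₂.contDiffAt (hs.mem_nhds ht)).of_le (WithTop.coe_le_coe.mpr le_top)
  have d₁ : ∀ t ∈ s, DifferentiableAt ℝ w₁ t :=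
    fun t ht => (hc₁ t ht).differentiableAt two_ne_zero
  have d₂ : ∀ t ∈ s, DifferentiableAt ℝ w₂ t :=
    fun t ht => (hc₂ t ht).differentiableAt two_ne_zero
  have dw1 : DifferentiableAt ℝ w₁ z := d₁ z hz
  have dw2 : DifferentiableAt ℝ w₂ z := d₂ z hz
  have hD1 : DifferentiableAt ℝ (fderiv ℝ w₁) z :=
    ((hc₁ z hz).fderiv_right (m := 1) (le_refl _)).differentiableAt one_ne_zero
  have hD2 : DifferentiableAt ℝ (fderiv ℝ w₂) z :=
    ((hc₂ z hz).fderiv_right (m := 1) (le_refl _)).differentiableAt one_ne_zero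
  have da : DifferentiableAt ℝ (fun t => wdz w₁ t) z := CP2aux.diff_wdz hD1
  have db : DifferentiableAt ℝ (fun t => wdz w₂ t) z := CP2aux.diff_wdz hD2
  have dp : DifferentiableAt ℝ (fun t => wdzbar w₁ t) z := CP2aux.diff_wdzbar hD1
  have dq : DifferentiableAt ℝ (fun t => wdzbar w₂ t) z := CP2aux.diff_wdzbar hD2
  have dca : DifferentiableAt ℝ (fun t => conj (w₁ t)) z := CP2aux.diff_conj dw1
  have dcb : DifferentiableAt ℝ (fun t => conj (w₂ t)) z := CP2aux.diff_conj dw2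
  have dcp : DifferentiableAt ℝ (fun t => conj (wdzbar w₁ t)) z := CP2aux.diff_conj dp
  have dcq : DifferentiableAt ℝ (fun t => conj (wdzbar w₂ t)) z := CP2aux.diff_conj dq
  have hAfun : A = fun t => 1 + w₁ t * conj (w₁ t) + w₂ t * conj (w₂ t) := by
    funext t
    rw [hA t, Complex.mul_conj, Complex.mul_conj]
  have dA : DifferentiableAt ℝ A z := by
    rw [hAfun]
    exact ((differentiableAt_const _).add (dw1.mul dca)).add (dw2.mul dcb)
  have hAz : A z = 1 + w₁ z * conj (w₁ z) + w₂ z * conj (w₂ z) := by rw [hAfun]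
  have hA0 : A z ≠ 0 := by
    rw [hA z]
    have : (1 : ℂ) + ((normSq (w₁ z) : ℝ) : ℂ) + ((normSq (w₂ z) : ℝ) : ℂ)
        = (((1 + normSq (w₁ z) + normSq (w₂ z) : ℝ)) : ℂ) := by push_cast; ring
    rw [this]
    simp only [ne_eq, Complex.ofReal_eq_zero]
    intro h
    nlinarith [normSq_nonneg (w₁ z), normSq_nonneg (w₂ z)]
  have hS0 : A z * A z ≠ 0 := mul_ne_zero hA0 hA0
  have dS : DifferentiableAt ℝ (fun t => A t * A t) z := dA.mul dA
  have dInv : DifferentiableAt ℝ (fun t => (A t * A t)⁻¹) z := dS.inv hS0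
  -- replace the function by its conj-normal form near z
  have hFG : (fun t =>
        (wdz w₁ t * wdz (fun u => conj (w₁ u)) t
          + wdz w₂ t * wdz (fun u => conj (w₂ u)) t
          + (conj (w₁ t) * wdz (fun u => conj (w₂ u)) t
              - conj (w₂ t) * wdz (fun u => conj (w₁ u)) t)
            * (w₁ t * wdz w₂ t - w₂ t * wdz w₁ t)) / (A t) ^ 2)
      =ᶠ[nhds z] (fun t =>
        (wdz w₁ t * conj (wdzbar w₁ t)
          + wdz w₂ t * conj (wdzbar w₂ t)
          + (conj (w₁ t) * conj (wdzbar w₂ t)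
              - conj (w₂ t) * conj (wdzbar w₁ t))
            * (w₁ t * wdz w₂ t - w₂ t * wdz w₁ t)) * (A t * A t)⁻¹) := by
    filter_upwards [hs.mem_nhds hz] with t ht
    rw [CP2aux.wdz_conj (d₁ t ht), CP2aux.wdz_conj (d₂ t ht), pow_two, div_eq_mul_inv]
  rw [CP2aux.wdzbar_congr hFG]
  -- differentiability of the numerator
  have dn1 : DifferentiableAt ℝ (fun t => wdz w₁ t * conj (wdzbar w₁ t)) z := da.mul dcp
  have dn2 : DifferentiableAt ℝ (fun t => wdz w₂ t * conj (wdzbar w₂ t)) z := db.mul dcq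
  have dn3 : DifferentiableAt ℝ (fun t => conj (w₁ t) * conj (wdzbar w₂ t)
      - conj (w₂ t) * conj (wdzbar w₁ t)) z := (dca.mul dcq).sub (dcb.mul dcp)
  have dn4 : DifferentiableAt ℝ (fun t => w₁ t * wdz w₂ t - w₂ t * wdz w₁ t) z :=
    (dw1.mul db).sub (dw2.mul da)
  have dn12 : DifferentiableAt ℝ (fun t => wdz w₁ t * conj (wdzbar w₁ t)
      + wdz w₂ t * conj (wdzbar w₂ t)) z := dn1.add dn2
  have dNum : DifferentiableAt ℝ (fun t =>
      wdz w₁ t * conj (wdzbar w₁ t) + wdz w₂ t * conj (wdzbar w₂ t)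
        + (conj (w₁ t) * conj (wdzbar w₂ t) - conj (w₂ t) * conj (wdzbar w₁ t))
          * (w₁ t * wdz w₂ t - w₂ t * wdz w₁ t)) z := dn12.add (dn3.mul dn4)
  -- expand the outer derivative
  have hG : wdzbar (fun t =>
        (wdz w₁ t * conj (wdzbar w₁ t)
          + wdz w₂ t * conj (wdzbar w₂ t)
          + (conj (w₁ t) * conj (wdzbar w₂ t)
              - conj (w₂ t) * conj (wdzbar w₁ t))
            * (w₁ t * wdz w₂ t - w₂ t * wdz w₁ t)) * (A t * A t)⁻¹) z
      = wdzbar (fun t =>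
        wdz w₁ t * conj (wdzbar w₁ t) + wdz w₂ t * conj (wdzbar w₂ t)
          + (conj (w₁ t) * conj (wdzbar w₂ t) - conj (w₂ t) * conj (wdzbar w₁ t))
            * (w₁ t * wdz w₂ t - w₂ t * wdz w₁ t)) z * (A z * A z)⁻¹
        + (wdz w₁ z * conj (wdzbar w₁ z) + wdz w₂ z * conj (wdzbar w₂ z)
          + (conj (w₁ z) * conj (wdzbar w₂ z) - conj (w₂ z) * conj (wdzbar w₁ z))
            * (w₁ z * wdz w₂ z - w₂ z * wdz w₁ z)) * wdzbar (fun t => (A t * A t)⁻¹) z :=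
    CP2aux.wdzbar_mul dNum dInv
  have hadd1 : wdzbar (fun t =>
        wdz w₁ t * conj (wdzbar w₁ t) + wdz w₂ t * conj (wdzbar w₂ t)
          + (conj (w₁ t) * conj (wdzbar w₂ t) - conj (w₂ t) * conj (wdzbar w₁ t))
            * (w₁ t * wdz w₂ t - w₂ t * wdz w₁ t)) z
      = wdzbar (fun t => wdz w₁ t * conj (wdzbar w₁ t)
          + wdz w₂ t * conj (wdzbar w₂ t)) z
        + wdzbar (fun t =>
            (conj (w₁ t) * conj (wdzbar w₂ t) - conj (w₂ t) * conj (wdzbar w₁ t))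
            * (w₁ t * wdz w₂ t - w₂ t * wdz w₁ t)) z :=
    CP2aux.wdzbar_add dn12 (dn3.mul dn4)
  have hadd2 : wdzbar (fun t => wdz w₁ t * conj (wdzbar w₁ t)
        + wdz w₂ t * conj (wdzbar w₂ t)) z
      = wdzbar (fun t => wdz w₁ t * conj (wdzbar w₁ t)) z
        + wdzbar (fun t => wdz w₂ t * conj (wdzbar w₂ t)) z :=
    CP2aux.wdzbar_add dn1 dn2
  have hn1 : wdzbar (fun t => wdz w₁ t * conj (wdzbar w₁ t)) z
      = wdzbar (fun t => wdz w₁ t) z * conj (wdzbar w₁ z)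
        + wdz w₁ z * wdzbar (fun t => conj (wdzbar w₁ t)) z :=
    CP2aux.wdzbar_mul da dcp
  have hn2 : wdzbar (fun t => wdz w₂ t * conj (wdzbar w₂ t)) z
      = wdzbar (fun t => wdz w₂ t) z * conj (wdzbar w₂ z)
        + wdz w₂ z * wdzbar (fun t => conj (wdzbar w₂ t)) z :=
    CP2aux.wdzbar_mul db dcq
  have hn34 : wdzbar (fun t =>
        (conj (w₁ t) * conj (wdzbar w₂ t) - conj (w₂ t) * conj (wdzbar w₁ t))
          * (w₁ t * wdz w₂ t - w₂ t * wdz w₁ t)) z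
      = wdzbar (fun t => conj (w₁ t) * conj (wdzbar w₂ t)
            - conj (w₂ t) * conj (wdzbar w₁ t)) z
          * (w₁ z * wdz w₂ z - w₂ z * wdz w₁ z)
        + (conj (w₁ z) * conj (wdzbar w₂ z) - conj (w₂ z) * conj (wdzbar w₁ z))
          * wdzbar (fun t => w₁ t * wdz w₂ t - w₂ t * wdz w₁ t) z :=
    CP2aux.wdzbar_mul dn3 dn4
  have hn3 : wdzbar (fun t => conj (w₁ t) * conj (wdzbar w₂ t)
        - conj (w₂ t) * conj (wdzbar w₁ t)) z
      = (wdzbar (fun t => conj (w₁ t)) z * conj (wdzbar w₂ z)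
          + conj (w₁ z) * wdzbar (fun t => conj (wdzbar w₂ t)) z)
        - (wdzbar (fun t => conj (w₂ t)) z * conj (wdzbar w₁ z)
          + conj (w₂ z) * wdzbar (fun t => conj (wdzbar w₁ t)) z) := by
    rw [CP2aux.wdzbar_sub (f := fun t => conj (w₁ t) * conj (wdzbar w₂ t))
        (g := fun t => conj (w₂ t) * conj (wdzbar w₁ t)) (dca.mul dcq) (dcb.mul dcp),
        CP2aux.wdzbar_mul dca dcq, CP2aux.wdzbar_mul dcb dcp]
  have hn4 : wdzbar (fun t => w₁ t * wdz w₂ t - w₂ t * wdz w₁ t) z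
      = (wdzbar w₁ z * wdz w₂ z + w₁ z * wdzbar (fun t => wdz w₂ t) z)
        - (wdzbar w₂ z * wdz w₁ z + w₂ z * wdzbar (fun t => wdz w₁ t) z) := by
    rw [CP2aux.wdzbar_sub (f := fun t => w₁ t * wdz w₂ t) (g := fun t => w₂ t * wdz w₁ t)
        (dw1.mul db) (dw2.mul da),
        CP2aux.wdzbar_mul dw1 db, CP2aux.wdzbar_mul dw2 da]
  have hS : wdzbar (fun t => A t * A t) z = wdzbar A z * A z + A z * wdzbar A z :=
    CP2aux.wdzbar_mul dA dA
  have hInv : wdzbar (fun t => (A t * A t)⁻¹) z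
      = -(wdzbar A z * A z + A z * wdzbar A z) / (A z * A z) ^ 2 := by
    rw [CP2aux.wdzbar_inv dS hS0, hS]
  -- basic first-order rewrites
  have hcomm1 : wdzbar (fun t => wdz w₁ t) z = wdz (fun t => wdzbar w₁ t) z :=
    (CP2aux.wdz_wdzbar_comm (hc₁ z hz)).symm
  have hcomm2 : wdzbar (fun t => wdz w₂ t) z = wdz (fun t => wdzbar w₂ t) z :=
    (CP2aux.wdz_wdzbar_comm (hc₂ z hz)).symm
  have hcp : wdzbar (fun t => conj (wdzbar w₁ t)) z
      = conj (wdz (fun t => wdzbar w₁ t) z) := CP2aux.wdzbar_conj dp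
  have hcq : wdzbar (fun t => conj (wdzbar w₂ t)) z
      = conj (wdz (fun t => wdzbar w₂ t) z) := CP2aux.wdzbar_conj dq
  have hca : wdzbar (fun t => conj (w₁ t)) z = conj (wdz w₁ z) :=
    CP2aux.wdzbar_conj dw1
  have hcb : wdzbar (fun t => conj (w₂ t)) z = conj (wdz w₂ z) :=
    CP2aux.wdzbar_conj dw2
  have hdbarA : wdzbar A z
      = wdzbar w₁ z * conj (w₁ z) + w₁ z * conj (wdz w₁ z)
        + (wdzbar w₂ z * conj (w₂ z) + w₂ z * conj (wdz w₂ z)) := by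
    rw [hAfun]
    have h1 : wdzbar (fun t => (1 : ℂ) + w₁ t * conj (w₁ t) + w₂ t * conj (w₂ t)) z
        = wdzbar (fun t => (1 : ℂ) + w₁ t * conj (w₁ t)) z
          + wdzbar (fun t => w₂ t * conj (w₂ t)) z :=
      CP2aux.wdzbar_add ((differentiableAt_const _).add (dw1.mul dca)) (dw2.mul dcb)
    have h2 : wdzbar (fun t => (1 : ℂ) + w₁ t * conj (w₁ t)) z
        = wdzbar (fun _ => (1 : ℂ)) z + wdzbar (fun t => w₁ t * conj (w₁ t)) z :=
      CP2aux.wdzbar_add (differentiableAt_const _) (dw1.mul dca)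
    rw [h1, h2, CP2aux.wdzbar_const, CP2aux.wdzbar_mul dw1 dca,
        CP2aux.wdzbar_mul dw2 dcb, hca, hcb]
    ring
  -- the field equations
  have hE1 : wdz (fun t => wdzbar w₁ t) z
      = 2 * conj (w₁ z) / A z * wdz w₁ z * wdzbar w₁ z
        + conj (w₂ z) / A z * (wdz w₁ z * wdzbar w₂ z + wdzbar w₁ z * wdz w₂ z) := by
    have := heq1 z hz; linear_combination this
  have hE2 : wdz (fun t => wdzbar w₂ t) z
      = 2 * conj (w₂ z) / A z * wdz w₂ z * wdzbar w₂ z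
        + conj (w₁ z) / A z * (wdz w₁ z * wdzbar w₂ z + wdzbar w₁ z * wdz w₂ z) := by
    have := heq2 z hz; linear_combination this
  have hconjA : conj (A z) = A z := by
    rw [hA z]
    simp [Complex.conj_ofReal]
  have hcE1 : conj (wdz (fun t => wdzbar w₁ t) z)
      = 2 * w₁ z / A z * conj (wdz w₁ z) * conj (wdzbar w₁ z)
        + w₂ z / A z * (conj (wdz w₁ z) * conj (wdzbar w₂ z)
            + conj (wdzbar w₁ z) * conj (wdz w₂ z)) := by
    have h := congrArg conj hE1
    simpa [map_add, map_mul, map_div₀, map_ofNat, hconjA, Complex.conj_conj] using h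
  have hcE2 : conj (wdz (fun t => wdzbar w₂ t) z)
      = 2 * w₂ z / A z * conj (wdz w₂ z) * conj (wdzbar w₂ z)
        + w₁ z / A z * (conj (wdz w₁ z) * conj (wdzbar w₂ z)
            + conj (wdzbar w₁ z) * conj (wdz w₂ z)) := by
    have h := congrArg conj hE2
    simpa [map_add, map_mul, map_div₀, map_ofNat, hconjA, Complex.conj_conj] using h
  rw [hG, hadd1, hadd2, hn1, hn2, hn34, hn3, hn4, hInv, hcomm1, hcomm2,
      hcp, hcq, hca, hcb, hdbarA, hcE1, hcE2, hE1, hE2, hAz]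
  have h10 : (1 : ℂ) + w₁ z * conj (w₁ z) + w₂ z * conj (w₂ z) ≠ 0 := hAz ▸ hA0
  set D := (1 : ℂ) + w₁ z * conj (w₁ z) + w₂ z * conj (w₂ z) with hD
  field_simp
  rw [hD]
  ring
end
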